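/- Let g be a Lie algebra and n : g → g a linear map with vanishing algebraic Nijenhuis torsion, τn(x,y) := [nx,ny] - n([nx,y] + [x,ny] - n[x,y]) = 0 for all x,y. Then the deformed bracket [x,y]_n := [nx,y] + [x,ny] - n[x,y] is a Lie bracket on g, and n : (g,[·,·]_n) → (g,[·,·]) is a Lie algebra homomorphism. -/
import Mathlib


/-- The bracket deformed by a linear map `n`: `[x,y]_n = [nx,y] + [x,ny] - n[x,y]`. -/
def defBracket {K g : Type*} [Field K] [LieRing g] [LieAlgebra K g]
    (n : g →ₗ[K] g) (x y : g) : g :=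
  ⁅n x, y⁆ + ⁅x, n y⁆ - n ⁅x, y⁆

/-- If `g` is a Lie algebra over a field of characteristic zero and `n : g → g` is a
linear map with vanishing algebraic Nijenhuis torsion
`τn(x,y) = [nx,ny] - n([nx,y] + [x,ny] - n[x,y]) = 0`, then the deformed bracket
`[x,y]_n := [nx,y] + [x,ny] - n[x,y]` is a Lie bracket on `g` (alternating,
skew-symmetric, satisfying the Jacobi identity), and
`n : (g,[·,·]_n) → (g,[·,·])` is a Lie algebra homomorphism. -/
theorem stmt17 {K g : Type*} [Field K] [CharZero K] [LieRing g] [LieAlgebra K g]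
    (n : g →ₗ[K] g)
    (hn : ∀ x y : g, ⁅n x, n y⁆ - n (⁅n x, y⁆ + ⁅x, n y⁆ - n ⁅x, y⁆) = 0) :
    (∀ x : g, defBracket n x x = 0) ∧
    (∀ x y : g, defBracket n x y = - defBracket n y x) ∧
    (∀ x y z : g,
      defBracket n (defBracket n x y) z + defBracket n (defBracket n y z) x +
        defBracket n (defBracket n z x) y = 0) ∧
    (∀ x y : g, n (defBracket n x y) = ⁅n x, n y⁆) := by
  have jac : ∀ a b c : g, ⁅⁅a,b⁆,c⁆ + ⁅⁅c,a⁆,b⁆ + ⁅⁅b,c⁆,a⁆ = 0 := by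
    intro a b c
    have h := lie_jacobi a b c
    rw [← lie_skew c ⁅a,b⁆, ← lie_skew b ⁅c,a⁆, ← lie_skew a ⁅b,c⁆] at h
    linear_combination (norm := module) -h
  have hN : ∀ a b : g, n ⁅n a, b⁆ + n ⁅a, n b⁆ - n (n ⁅a, b⁆) = ⁅n a, n b⁆ := by
    intro a b
    have h := hn a b
    rw [sub_eq_zero, map_sub, map_add] at h
    exact h.symm
  refine ⟨?_, ?_, ?_, ?_⟩
  · intro x
    simp only [defBracket, lie_self, map_zero, sub_zero]
    rw [← lie_skew x (n x)]
    abel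
  · intro x y
    simp only [defBracket]
    rw [← lie_skew y (n x), ← lie_skew (n y) x, ← lie_skew y x, map_neg]
    abel
  · intro x y z
    have K1 := congrArg (fun t => ⁅t, z⁆) (hN x y)
    have K2 := congrArg (fun t => ⁅t, x⁆) (hN y z)
    have K3 := congrArg (fun t => ⁅t, y⁆) (hN z x)
    simp only [add_lie, sub_lie] at K1 K2 K3
    have M1 := hN ⁅x,y⁆ z
    have M2 := hN ⁅y,z⁆ x
    have M3 := hN ⁅z,x⁆ y
    have N1 := congrArg n (jac (n x) y z)
    have N2 := congrArg n (jac (n y) z x)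
    have N3 := congrArg n (jac (n z) x y)
    have NN := congrArg (fun t => n (n t)) (jac x y z)
    simp only [map_add, map_zero] at N1 N2 N3 NN
    have T1 := jac (n x) (n y) z
    have T2 := jac (n y) (n z) x
    have T3 := jac (n z) (n x) y
    simp only [defBracket, map_add, map_sub, lie_add, add_lie, lie_sub, sub_lie]
    linear_combination (norm := module) K1 + K2 + K3 + M1 + M2 + M3 + T1 + T2 + T3 - N1 - N2 - N3 + NN
  · intro x y
    have h := hn x y
    rw [sub_eq_zero] at h
    simp only [defBracket]
    exact h.symm
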